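/- arXiv:2601.21834 — 2 statements merged into one kernel-verified Lean document; each statement's English description precedes it below -/
import Mathlib

section
/- Let O be a complete discrete valuation ring with maximal ideal J(O) and residue field k, let P be a finite group, and let M be a finitely generated O-free O[P]-module with a P-stable O-basis X (a permutation module). Then any P-stable k-basis Y of M/J(O)M lifts to a P-stable O-basis of M: there exists a P-stable O-basis of M whose image in M/J(O)M is Y. -/
/-!
Choose a representative `ȳ` in each `P`-orbit of `Y` and lift it to an element of `M` fixed by
the stabilizer of `ȳ`. For a permutation module such a lift exists: the coordinates (in `X`) of
any lift are congruent modulo `J(O)` along orbits of the stabilizer, so making them constant on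
those orbits gives a fixed lift. Transporting the lifts along `P` yields a `P`-equivariant section
`σ` of `M → M/J(O)M`, and `Z = σ(Y)` is `P`-stable with image `Y`. By Nakayama's lemma `Z` spans
`M`, and since `M` is free, hence flat, a lift of a `k`-basis of `M/J(O)M` is linearly
independent.
-/

open IsLocalRing TensorProduct

section EquivariantSection

variable {G A B : Type*} [Group G] [MulAction G A] [MulAction G B]

theorem MulAction.exists_equivariant_section (f : A → B)
    (hf : ∀ (g : G) a, f (g • a) = g • f a)
    (hlift : ∀ b, ∃ a, f a = b ∧ ∀ g : G, g • b = b → g • a = a) :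
    ∃ s : B → A, (∀ b, f (s b) = b) ∧ ∀ (g : G) b, s (g • b) = g • s b := by
  choose a hfa hfix using hlift
  let r : B → B := fun b => (Quotient.mk (orbitRel G B) b).out
  have hr_smul (g : G) (b : B) : r (g • b) = r b :=
    congrArg Quotient.out (Quotient.sound (mem_orbit b g))
  choose t ht using fun b => Quotient.mk_out (s := orbitRel G B) b
  have hrt (b : B) : (t b)⁻¹ • r b = b := inv_smul_eq_iff.2 (ht b).symm
  -- `a (r b)` is fixed by the stabilizer of `r b`, so moving it to `b` does not depend on the
  -- group element used.
  have hwd {g g' : G} {b : B} (h : g • r b = g' • r b) : g • a (r b) = g' • a (r b) := by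
    rw [← inv_smul_eq_iff, smul_smul, hfix _ _ (by rw [mul_smul, h, inv_smul_smul])]
  refine ⟨fun b => (t b)⁻¹ • a (r b), fun b => by rw [hf, hfa, hrt], fun g b => ?_⟩
  rw [smul_smul, ← hr_smul g b]
  apply hwd
  rw [hrt, hr_smul, mul_smul, hrt]

end EquivariantSection

section QuotientAction

variable {O M P : Type*} [CommRing O] [AddCommGroup M] [Module O M]
  [Group P] [DistribMulAction P M] [SMulCommClass P O M] (I : Ideal O)

theorem Submodule.ideal_smul_top_le_comap_smul (p : P) :
    (I • ⊤ : Submodule O M) ≤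
      (I • ⊤ : Submodule O M).comap (DistribSMul.toLinearMap O M p) :=
  Submodule.smul_le.2 fun r hr m _ => by
    rw [Submodule.mem_comap, DistribSMul.toLinearMap_apply, smul_comm]
    exact Submodule.smul_mem_smul hr trivial

noncomputable instance Submodule.Quotient.mulActionIdealSMulTop :
    MulAction P (M ⧸ (I • ⊤ : Submodule O M)) where
  smul p := Submodule.mapQ _ _ (DistribSMul.toLinearMap O M p)
    (Submodule.ideal_smul_top_le_comap_smul I p)
  one_smul := by
    rintro ⟨m⟩
    exact congrArg Submodule.Quotient.mk (one_smul P m)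
  mul_smul p q := by
    rintro ⟨m⟩
    exact congrArg Submodule.Quotient.mk (mul_smul p q m)

theorem Submodule.Quotient.smul_mk_ideal_smul_top (p : P) (m : M) :
    p • (Submodule.Quotient.mk m : M ⧸ (I • ⊤ : Submodule O M)) =
      Submodule.Quotient.mk (p • m) :=
  rfl

end QuotientAction

section PermutationBasis

variable {O M ι : Type*} [CommRing O] [AddCommGroup M] [Module O M]

theorem Module.Basis.mem_ideal_smul_top_iff (b : Basis ι O M) (I : Ideal O) {m : M} :
    m ∈ (I • ⊤ : Submodule O M) ↔ ∀ i, b.repr m i ∈ I := by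
  rw [← b.span_eq, Submodule.mem_ideal_smul_span_iff_exists_sum]
  constructor
  · rintro ⟨c, hc, rfl⟩ i
    rw [← Finsupp.linearCombination_apply, b.repr_linearCombination]
    exact hc i
  · intro h
    exact ⟨b.repr m, h, b.linearCombination_repr m⟩

variable {P : Type*} [Group P] [DistribMulAction P M] [SMulCommClass P O M] [MulAction P ι]

theorem Module.Basis.repr_smul_of_smul_eq {b : Module.Basis ι O M}
    (hb : ∀ (p : P) i, p • b i = b (p • i)) (p : P) (m : M) (i : ι) :
    b.repr (p • m) i = b.repr m (p⁻¹ • i) := by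
  classical
  have : Finsupp.lapply i ∘ₗ b.repr.toLinearMap ∘ₗ DistribSMul.toLinearMap O M p =
      Finsupp.lapply (p⁻¹ • i) ∘ₗ b.repr.toLinearMap :=
    b.ext fun j => by
      simp [DistribSMul.toLinearMap_apply, hb, Finsupp.single_apply, eq_inv_smul_iff]
  exact LinearMap.congr_fun this m

theorem Module.Basis.exists_lift_fixed_by_stabilizer [Finite ι] {b : Module.Basis ι O M}
    (hb : ∀ (p : P) i, p • b i = b (p • i)) (I : Ideal O)
    (y : M ⧸ (I • ⊤ : Submodule O M)) :
    ∃ m : M, Submodule.Quotient.mk m = y ∧ ∀ p : P, p • y = y → p • m = m := by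
  obtain ⟨m₀, rfl⟩ := Submodule.Quotient.mk_surjective _ y
  let Q := MulAction.stabilizer P (Submodule.Quotient.mk m₀ : M ⧸ (I • ⊤ : Submodule O M))
  let r : ι → ι := fun i => (Quotient.mk (MulAction.orbitRel Q ι) i).out
  have hr_smul (q : Q) (i : ι) : r (q • i) = r i :=
    congrArg Quotient.out (Quotient.sound (MulAction.mem_orbit i q))
  -- Along a `Q`-orbit the coordinates of `m₀` only change by elements of `I`.
  let m := b.repr.symm (Finsupp.equivFunOnFinite.symm fun i => b.repr m₀ (r i))
  have hm (i : ι) : b.repr m i = b.repr m₀ (r i) := by simp [m]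
  refine ⟨m, ?_, fun p hp => ?_⟩
  · rw [Submodule.Quotient.eq, b.mem_ideal_smul_top_iff]
    intro i
    obtain ⟨q, hq⟩ := Quotient.mk_out (s := MulAction.orbitRel Q ι) i
    change (q : P) • i = r i at hq
    have hq' : (q⁻¹ : P) • Submodule.Quotient.mk m₀ =
        (Submodule.Quotient.mk m₀ : M ⧸ (I • ⊤ : Submodule O M)) :=
      Q.inv_mem q.2
    rw [Submodule.Quotient.smul_mk_ideal_smul_top, Submodule.Quotient.eq,
      b.mem_ideal_smul_top_iff] at hq'
    simpa [b.repr_smul_of_smul_eq hb, hm, ← hq] using hq' i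
  · apply b.repr.injective
    ext i
    rw [b.repr_smul_of_smul_eq hb, hm, hm]
    exact congrArg _ (hr_smul ⟨p⁻¹, Q.inv_mem hp⟩ i)

end PermutationBasis

theorem linearIndependent_of_forall_sum_smul_mk_eq_zero {O M : Type*} [CommRing O]
    [AddCommGroup M] [Module O M] (I : Ideal O) (Y : Set (M ⧸ (I • ⊤ : Submodule O M)))
    (hY : ∀ (s : Finset M) (c : M → O),
      (↑s : Set M) ⊆ {m : M | Submodule.Quotient.mk m ∈ Y} →
      Set.InjOn (fun m : M => (Submodule.Quotient.mk m : M ⧸ (I • ⊤ : Submodule O M)))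
        ↑s →
      (∑ m ∈ s, c m • (Submodule.Quotient.mk m : M ⧸ (I • ⊤ : Submodule O M))) = 0 →
      ∀ m ∈ s, c m ∈ I) :
    LinearIndependent (O ⧸ I) (Subtype.val : Y → M ⧸ (I • ⊤ : Submodule O M)) := by
  classical
  choose σ hσ using Submodule.Quotient.mk_surjective (I • ⊤ : Submodule O M)
  have hσinj : σ.Injective := Function.LeftInverse.injective hσ
  rw [linearIndependent_iff']
  intro s g hg y hy
  choose c hc using fun y => Ideal.Quotient.mk_surjective (g y)
  let c' : M → O := fun m => if h : Submodule.Quotient.mk m ∈ Y then c ⟨_, h⟩ else 0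
  have hc' (y : Y) : c' (σ y) = c y := by simp [c', hσ]
  have key := hY (s.image fun y : Y => σ y) c' ?_ ?_ ?_ (σ y) (Finset.mem_image_of_mem _ hy)
  · rw [← hc, Ideal.Quotient.eq_zero_iff_mem, ← hc']
    exact key
  · intro m hm
    obtain ⟨z, -, rfl⟩ := Finset.mem_image.1 hm
    simp [hσ]
  · rintro _ hm₁ _ hm₂ h
    obtain ⟨z₁, -, rfl⟩ := Finset.mem_image.1 hm₁
    obtain ⟨z₂, -, rfl⟩ := Finset.mem_image.1 hm₂
    simp only [hσ] at h
    rw [Subtype.ext h]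
  · rw [Finset.sum_image fun _ _ _ _ h => Subtype.ext (hσinj h)]
    simpa [hc', hσ, ← hc, Algebra.smul_def] using hg

theorem IsLocalRing.linearIndependent_of_linearIndependent_mk {O M : Type*} [CommRing O]
    [IsLocalRing O] [AddCommGroup M] [Module O M] [Module.Flat O M] {ι : Type*} {v : ι → M}
    (h : LinearIndependent (O ⧸ maximalIdeal O)
      (fun i => (Submodule.Quotient.mk (v i) : M ⧸ (maximalIdeal O • ⊤ : Submodule O M)))) :
    LinearIndependent O v := by
  let e : (M ⧸ (maximalIdeal O • ⊤ : Submodule O M)) ≃ₗ[O] ResidueField O ⊗[O] M :=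
    (quotTensorEquivQuotSMul M (maximalIdeal O)).symm
  refine Module.IsLocalRing.linearIndependent_of_flat v
    (h.map_of_injective_injective (R' := ResidueField O) id
      e.toAddMonoidHom (fun _ h => h) (fun _ h => (LinearEquiv.map_eq_zero_iff e).1 h) ?_)
  intro r m
  obtain ⟨r, rfl⟩ := Ideal.Quotient.mk_surjective r
  obtain ⟨m, rfl⟩ := Submodule.Quotient.mk_surjective _ m
  change e (Submodule.Quotient.mk (r • m)) = residue O r • (1 ⊗ₜ[O] m)
  rw [Submodule.Quotient.mk_smul, map_smul, ← ResidueField.algebraMap_eq, algebraMap_smul]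
  rfl

theorem stmt_7_general {O : Type*} [CommRing O] [IsLocalRing O]
    {P : Type*} [Group P]
    {M : Type*} [AddCommGroup M] [Module O M] [Module.Finite O M]
    [DistribMulAction P M] [SMulCommClass P O M]
    (X : Set M) (bX : Module.Basis X O M) (hbX : ∀ x : X, bX x = (x : M))
    (hXstable : ∀ p : P, ∀ x ∈ X, p • x ∈ X)
    (Y : Set (M ⧸ (IsLocalRing.maximalIdeal O • ⊤ : Submodule O M)))
    (hYspan : Submodule.span O Y = ⊤)
    (hYindep : ∀ (s : Finset M) (c : M → O), (↑s : Set M) ⊆ {m : M | Submodule.Quotient.mk m ∈ Y} →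
      Set.InjOn (fun m : M => (Submodule.Quotient.mk m :
          M ⧸ (IsLocalRing.maximalIdeal O • ⊤ : Submodule O M))) ↑s →
      (∑ m ∈ s, c m • (Submodule.Quotient.mk m :
          M ⧸ (IsLocalRing.maximalIdeal O • ⊤ : Submodule O M))) = 0 →
      ∀ m ∈ s, c m ∈ IsLocalRing.maximalIdeal O)
    (hYstable : ∀ p : P, ∀ m : M,
      (Submodule.Quotient.mk m : M ⧸ (IsLocalRing.maximalIdeal O • ⊤ : Submodule O M)) ∈ Y →
      (Submodule.Quotient.mk (p • m) :
          M ⧸ (IsLocalRing.maximalIdeal O • ⊤ : Submodule O M)) ∈ Y) :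
    ∃ Z : Set M, ∃ bZ : Module.Basis Z O M,
      (∀ z : Z, bZ z = (z : M)) ∧
      (∀ p : P, ∀ z ∈ Z, p • z ∈ Z) ∧
      (fun m : M => (Submodule.Quotient.mk m :
          M ⧸ (IsLocalRing.maximalIdeal O • ⊤ : Submodule O M))) '' Z = Y := by
  have : Finite X := Module.Finite.finite_basis bX
  have : Module.Free O M := Module.Free.of_basis bX
  let _ : MulAction P X :=
    { smul p x := ⟨p • (x : M), hXstable p x x.2⟩
      one_smul x := Subtype.ext (one_smul P (x : M))
      mul_smul p q x := Subtype.ext (mul_smul p q (x : M)) }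
  have hb (p : P) (x : X) : p • bX x = bX (p • x) := by
    rw [hbX, hbX]
    rfl
  obtain ⟨σ, hσ, hσ_smul⟩ := MulAction.exists_equivariant_section
    (fun m : M => (Submodule.Quotient.mk m : M ⧸ (maximalIdeal O • ⊤ : Submodule O M)))
    (fun _ _ => rfl) (bX.exists_lift_fixed_by_stabilizer hb _)
  have hZY : (fun m : M => (Submodule.Quotient.mk m :
      M ⧸ (maximalIdeal O • ⊤ : Submodule O M))) '' (σ '' Y) = Y := by
    simp [Set.image_image, hσ]
  have hli : LinearIndependent O (fun z : σ '' Y => (z : M)) :=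
    LinearIndepOn.id_image (linearIndependent_of_linearIndependent_mk
      (by simpa [hσ] using linearIndependent_of_forall_sum_smul_mk_eq_zero _ Y hYindep))
  have hsp : Submodule.span O (σ '' Y) = ⊤ := by
    rw [← IsLocalRing.map_mkQ_eq_top, Submodule.map_span]
    exact (congrArg _ hZY).trans hYspan
  refine ⟨σ '' Y, .mk hli (by rw [Subtype.range_coe, hsp]), fun z => Module.Basis.mk_apply _ _ z,
    ?_, hZY⟩
  rintro p _ ⟨y, hy, rfl⟩
  obtain ⟨m, rfl⟩ := Submodule.Quotient.mk_surjective _ y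
  exact ⟨p • Submodule.Quotient.mk m, hYstable p m hy, hσ_smul p _⟩

/-- Lifting a `P`-stable basis of `M/J(O)M` to a `P`-stable basis of a permutation
`O[P]`-module `M`, where `O` is a complete (discrete valuation / local) ring with
maximal ideal `J(O)` and residue field `k = O/J(O)`.  The quotient `M/J(O)M` is
formalized as `M ⧸ (J(O) • ⊤)`; a subset `Y` of it is a `k`-basis iff it spans it
as an `O`-module and every vanishing `O`-linear combination has all coefficients
in `J(O)`.  `P`-stability of `Y` is phrased via arbitrary lifts. -/
theorem stmt_7 {O : Type*} [CommRing O] [IsLocalRing O]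
    [IsAdicComplete (IsLocalRing.maximalIdeal O) O]
    {P : Type*} [Group P] [Finite P]
    {M : Type*} [AddCommGroup M] [Module O M] [Module.Finite O M]
    [DistribMulAction P M] [SMulCommClass P O M]
    (X : Set M) (bX : Module.Basis X O M) (hbX : ∀ x : X, bX x = (x : M))
    (hXstable : ∀ p : P, ∀ x ∈ X, p • x ∈ X)
    (Y : Set (M ⧸ (IsLocalRing.maximalIdeal O • ⊤ : Submodule O M)))
    (hYspan : Submodule.span O Y = ⊤)
    (hYindep : ∀ (s : Finset M) (c : M → O), (↑s : Set M) ⊆ {m : M | Submodule.Quotient.mk m ∈ Y} →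
      Set.InjOn (fun m : M => (Submodule.Quotient.mk m :
          M ⧸ (IsLocalRing.maximalIdeal O • ⊤ : Submodule O M))) ↑s →
      (∑ m ∈ s, c m • (Submodule.Quotient.mk m :
          M ⧸ (IsLocalRing.maximalIdeal O • ⊤ : Submodule O M))) = 0 →
      ∀ m ∈ s, c m ∈ IsLocalRing.maximalIdeal O)
    (hYstable : ∀ p : P, ∀ m : M,
      (Submodule.Quotient.mk m : M ⧸ (IsLocalRing.maximalIdeal O • ⊤ : Submodule O M)) ∈ Y →
      (Submodule.Quotient.mk (p • m) :
          M ⧸ (IsLocalRing.maximalIdeal O • ⊤ : Submodule O M)) ∈ Y) :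
    ∃ Z : Set M, ∃ bZ : Module.Basis Z O M,
      (∀ z : Z, bZ z = (z : M)) ∧
      (∀ p : P, ∀ z ∈ Z, p • z ∈ Z) ∧
      (fun m : M => (Submodule.Quotient.mk m :
          M ⧸ (IsLocalRing.maximalIdeal O • ⊤ : Submodule O M))) '' Z = Y :=
  stmt_7_general X bX hbX hXstable Y hYspan hYindep hYstable
end

section
/- Let G be a finite group, N a normal subgroup, D ≤ G a subgroup, and j an idempotent in the fixed-point algebra (O[N])^D. Suppose for x ∈ N_G(D)∩[G/N]-representative there exists a unit a_x in ((j·O[N]·j)^D)^× with a_x⁻¹ x j = j a_x⁻¹ x in O[G]. If Ω is a D×D-stable basis of j·O[N]·j consisting of invertible elements (of j·O[N]·j with identity j), then Ω_x := {ω·a_x⁻¹x·j : ω ∈ Ω} is a D×D-stable linearly independent set in j·O[N]x·j, with d₁(ω a_x⁻¹ x)d₂ = (d₁ ω (ˣd₂)) a_x⁻¹ x for all d₁, d₂ ∈ D. -/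
/-!
Put `u := a_x⁻¹ x`. Right multiplication by `x⁻¹ a_x` undoes right multiplication by `u` on
`jO[N]j`, since `ω u x⁻¹ a_x = ω a_x⁻¹ a_x = ω j = ω`; hence `ω ↦ ω u` carries the linearly
independent set `Ω` to a linearly independent set, and `ω u j = ω j u = ω u` shows that this set
is `Ω_x`. Since `a_x` commutes with `D`, so does its inverse `a_x⁻¹` in the corner ring, and then
`d₁ (ω u) d₂ = (d₁ ω ˣd₂) u` because `x d₂ = ˣd₂ x`; this gives the `D × D`-stability of `Ω_x`.
-/

open MonoidAlgebra

theorem LinearIndepOn.id_image_of_leftInvOn {R M M' : Type*} [Semiring R] [AddCommMonoid M]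
    [AddCommMonoid M'] [Module R M] [Module R M'] {s : Set M} (hs : LinearIndepOn R id s)
    (f : M → M') (g : M' →ₗ[R] M) (hgf : Set.LeftInvOn g f s) :
    LinearIndepOn R id (f '' s) :=
  (LinearIndepOn.of_comp g (hs.congr fun _ hm ↦ (hgf hm).symm)).id_image

theorem Commute.corner_inv_right {R : Type*} [Semigroup R] {e a b c : R} (hab : a * b = e)
    (hba : b * a = e) (heb : e * b = b) (hbe : b * e = b) (hce : Commute c e)
    (hca : Commute c a) : Commute c b :=
  calc c * b = c * e * b := by rw [mul_assoc, heb]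
    _ = e * c * b := by rw [hce.eq]
    _ = b * a * c * b := by rw [hba]
    _ = b * c * (a * b) := by rw [mul_assoc b, ← hca.eq]; simp only [mul_assoc]
    _ = b * c := by rw [hab, mul_assoc, hce.eq, ← mul_assoc, hbe]

namespace MonoidAlgebra

variable {k G : Type*} [Semiring k]

theorem coeff_mul_mem_of_coeff_mem [Monoid G] (S : Submonoid G) {f h : k[G]}
    (hf : ∀ g, f.coeff g ≠ 0 → g ∈ S) (hh : ∀ g, h.coeff g ≠ 0 → g ∈ S) :
    ∀ g, (f * h).coeff g ≠ 0 → g ∈ S := by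
  classical
  intro g hg
  obtain ⟨g₁, hg₁, g₂, hg₂, rfl⟩ :=
    Finset.mem_mul.1 (support_coeff_mul_subset f h (Finsupp.mem_support_iff.2 hg))
  exact S.mul_mem (hf g₁ (Finsupp.mem_support_iff.1 hg₁)) (hh g₂ (Finsupp.mem_support_iff.1 hg₂))

theorem mul_of_mem_span_of_coeff_mem [Monoid G] (s : Set G) {f : k[G]}
    (hf : ∀ g, f.coeff g ≠ 0 → g ∈ s) (x : G) :
    f * of k G x ∈ Submodule.span k {z : k[G] | ∃ n ∈ s, z = of k G (n * x)} := by
  have hmap := Submodule.mem_map_of_mem (f := LinearMap.mulRight k (of k G x))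
    (mem_span_support_coeff f)
  rw [Submodule.map_span] at hmap
  refine Submodule.span_mono ?_ hmap
  rintro _ ⟨_, ⟨g, hg, rfl⟩, rfl⟩
  exact ⟨g, hf g (Finsupp.mem_support_iff.1 hg), by simp⟩

theorem of_mul_of_eq_of_conj_mul_of [Group G] (x d : G) :
    of k G x * of k G d = of k G (x * d * x⁻¹) * of k G x := by
  rw [← map_mul, ← map_mul, inv_mul_cancel_right]

theorem of_mul_mul_of_mul_of_eq_of_commute [Group G] {ω b : k[G]} {x d₂ : G}
    (hb : Commute (of k G (x * d₂ * x⁻¹)) b) (d₁ : G) :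
    of k G d₁ * (ω * b * of k G x) * of k G d₂
      = (of k G d₁ * ω * of k G (x * d₂ * x⁻¹)) * b * of k G x := by
  simp only [mul_assoc]
  rw [of_mul_of_eq_of_conj_mul_of, ← mul_assoc b, ← hb.eq, mul_assoc, mul_assoc x]

end MonoidAlgebra

theorem stmt_17_general {O : Type*} [CommRing O] {G : Type*} [Group G]
    (N : Subgroup G) (D : Subgroup G)
    (x : G) (hx : ∀ d ∈ D, x * d * x⁻¹ ∈ D)
    (j : MonoidAlgebra O G)
    (hjidem : j * j = j)
    (hjD : ∀ d ∈ D, MonoidAlgebra.of O G d * j = j * MonoidAlgebra.of O G d)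
    (a b : MonoidAlgebra O G)
    (hbN : ∀ g : G, b.coeff g ≠ 0 → g ∈ N)
    (hab : a * b = j ∧ b * a = j ∧ j * a * j = a ∧ j * b * j = b)
    (haD : ∀ d ∈ D, MonoidAlgebra.of O G d * a = a * MonoidAlgebra.of O G d)
    (hcomm : b * MonoidAlgebra.of O G x * j = j * (b * MonoidAlgebra.of O G x))
    (Ω : Set (MonoidAlgebra O G))
    (hΩj : ∀ ω ∈ Ω, j * ω * j = ω ∧ ∀ g : G, ω.coeff g ≠ 0 → g ∈ N)
    (hΩstable : ∀ d₁ ∈ D, ∀ d₂ ∈ D, ∀ ω ∈ Ω,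
      MonoidAlgebra.of O G d₁ * ω * MonoidAlgebra.of O G d₂ ∈ Ω)
    (hΩindep : LinearIndependent O ((↑) : Ω → MonoidAlgebra O G)) :
    LinearIndependent O
      ((↑) : {y : MonoidAlgebra O G | ∃ ω ∈ Ω, y = ω * b * MonoidAlgebra.of O G x * j}
        → MonoidAlgebra O G) ∧
    (∀ y ∈ {y : MonoidAlgebra O G | ∃ ω ∈ Ω, y = ω * b * MonoidAlgebra.of O G x * j},
      ∃ c ∈ Submodule.span O
          {z : MonoidAlgebra O G | ∃ n ∈ N, z = MonoidAlgebra.of O G (n * x)},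
        y = j * c * j) ∧
    (∀ d₁ ∈ D, ∀ d₂ ∈ D, ∀ ω ∈ Ω,
      MonoidAlgebra.of O G d₁ * (ω * b * MonoidAlgebra.of O G x) * MonoidAlgebra.of O G d₂
        = (MonoidAlgebra.of O G d₁ * ω * MonoidAlgebra.of O G (x * d₂ * x⁻¹))
            * b * MonoidAlgebra.of O G x) ∧
    (∀ d₁ ∈ D, ∀ d₂ ∈ D,
      ∀ y ∈ {y : MonoidAlgebra O G | ∃ ω ∈ Ω, y = ω * b * MonoidAlgebra.of O G x * j},
        MonoidAlgebra.of O G d₁ * y * MonoidAlgebra.of O G d₂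
          ∈ {y : MonoidAlgebra O G | ∃ ω ∈ Ω, y = ω * b * MonoidAlgebra.of O G x * j}) := by
  obtain ⟨hab, hba, -, hbj⟩ := hab
  have hΩcorner (ω) (hω : ω ∈ Ω) := (Subsemigroup.mem_corner_iff hjidem).1 ⟨ω, (hΩj ω hω).1⟩
  have hbcorner := (Subsemigroup.mem_corner_iff hjidem).1 ⟨b, hbj⟩
  have hdrop (ω) (hω : ω ∈ Ω) : ω * b * of O G x * j = ω * (b * of O G x) := by
    rw [mul_assoc ω, mul_assoc ω, hcomm, ← mul_assoc, (hΩcorner ω hω).2]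
  have hΩx : {y | ∃ ω ∈ Ω, y = ω * b * of O G x * j} = (· * (b * of O G x)) '' Ω := by
    ext y
    exact ⟨fun ⟨ω, hω, hy⟩ ↦ ⟨ω, hω, by rw [hy, hdrop ω hω]⟩,
      fun ⟨ω, hω, hy⟩ ↦ ⟨ω, hω, by rw [← hy, hdrop ω hω]⟩⟩
  have hconj : ∀ d₁ ∈ D, ∀ d₂ ∈ D, ∀ ω ∈ Ω,
      of O G d₁ * (ω * b * of O G x) * of O G d₂
        = (of O G d₁ * ω * of O G (x * d₂ * x⁻¹)) * b * of O G x := fun d₁ _ d₂ hd₂ _ _ ↦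
    of_mul_mul_of_mul_of_eq_of_commute (Commute.corner_inv_right hab hba hbcorner.1 hbcorner.2
      (hjD _ (hx d₂ hd₂)) (haD _ (hx d₂ hd₂))) d₁
  have hretract : Set.LeftInvOn (LinearMap.mulRight O (of O G x⁻¹ * a)) (· * (b * of O G x)) Ω :=
    fun ω hω ↦ show ω * (b * of O G x) * (of O G x⁻¹ * a) = ω by
      rw [mul_assoc, mul_assoc b, ← mul_assoc (of O G x), ← map_mul, mul_inv_cancel, map_one,
        one_mul, hba, (hΩcorner ω hω).2]
  refine ⟨?_, ?_, hconj, ?_⟩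
  · rw [hΩx]
    exact LinearIndepOn.id_image_of_leftInvOn hΩindep _ _ hretract
  · rintro y ⟨ω, hω, rfl⟩
    refine ⟨ω * b * of O G x, mul_of_mem_span_of_coeff_mem _
      (coeff_mul_mem_of_coeff_mem N.toSubmonoid (hΩj ω hω).2 hbN) x, ?_⟩
    simp only [← mul_assoc, (hΩcorner ω hω).1]
  · rintro d₁ hd₁ d₂ hd₂ _ ⟨ω, hω, rfl⟩
    have hmem := hΩstable d₁ hd₁ _ (hx d₂ hd₂) ω hω
    refine ⟨_, hmem, ?_⟩
    rw [hdrop ω hω, hdrop _ hmem, ← mul_assoc ω, ← mul_assoc _ b, hconj d₁ hd₁ d₂ hd₂ ω hω]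

/-- The computation in Proposition 2.2: if `Ω` is a `D×D`-stable basis of `jO[N]j`
consisting of invertible elements (w.r.t. the identity `j`), and `a_x` is a `D`-fixed
unit of `(jO[N]j)^D` with `a_x⁻¹ x j = j a_x⁻¹ x`, then
`Ω_x = {ω·a_x⁻¹x·j : ω ∈ Ω}` is a `D×D`-stable linearly independent subset of
`j·O[Nx]·j`, and `d₁(ω a_x⁻¹ x)d₂ = (d₁ ω (ˣd₂)) a_x⁻¹ x` for `d₁, d₂ ∈ D`. -/
theorem stmt_17 {O : Type*} [CommRing O] {G : Type*} [Group G] [Finite G]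
    (N : Subgroup G) [N.Normal] (D : Subgroup G) (hDN : D ≤ N)
    (x : G) (hx : ∀ d ∈ D, x * d * x⁻¹ ∈ D)
    (j : MonoidAlgebra O G)
    (hjN : ∀ g : G, j.coeff g ≠ 0 → g ∈ N) (hjidem : j * j = j)
    (hjD : ∀ d ∈ D, MonoidAlgebra.of O G d * j = j * MonoidAlgebra.of O G d)
    (a b : MonoidAlgebra O G)
    (haN : ∀ g : G, a.coeff g ≠ 0 → g ∈ N) (hbN : ∀ g : G, b.coeff g ≠ 0 → g ∈ N)
    (hab : a * b = j ∧ b * a = j ∧ j * a * j = a ∧ j * b * j = b)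
    (haD : ∀ d ∈ D, MonoidAlgebra.of O G d * a = a * MonoidAlgebra.of O G d)
    (hcomm : b * MonoidAlgebra.of O G x * j = j * (b * MonoidAlgebra.of O G x))
    (Ω : Set (MonoidAlgebra O G))
    (hΩj : ∀ ω ∈ Ω, j * ω * j = ω ∧ ∀ g : G, ω.coeff g ≠ 0 → g ∈ N)
    (hΩunit : ∀ ω ∈ Ω, ∃ ω' : MonoidAlgebra O G, ω * ω' = j ∧ ω' * ω = j)
    (hΩstable : ∀ d₁ ∈ D, ∀ d₂ ∈ D, ∀ ω ∈ Ω,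
      MonoidAlgebra.of O G d₁ * ω * MonoidAlgebra.of O G d₂ ∈ Ω)
    (hΩindep : LinearIndependent O ((↑) : Ω → MonoidAlgebra O G)) :
    LinearIndependent O
      ((↑) : {y : MonoidAlgebra O G | ∃ ω ∈ Ω, y = ω * b * MonoidAlgebra.of O G x * j}
        → MonoidAlgebra O G) ∧
    (∀ y ∈ {y : MonoidAlgebra O G | ∃ ω ∈ Ω, y = ω * b * MonoidAlgebra.of O G x * j},
      ∃ c ∈ Submodule.span O
          {z : MonoidAlgebra O G | ∃ n ∈ N, z = MonoidAlgebra.of O G (n * x)},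
        y = j * c * j) ∧
    (∀ d₁ ∈ D, ∀ d₂ ∈ D, ∀ ω ∈ Ω,
      MonoidAlgebra.of O G d₁ * (ω * b * MonoidAlgebra.of O G x) * MonoidAlgebra.of O G d₂
        = (MonoidAlgebra.of O G d₁ * ω * MonoidAlgebra.of O G (x * d₂ * x⁻¹))
            * b * MonoidAlgebra.of O G x) ∧
    (∀ d₁ ∈ D, ∀ d₂ ∈ D,
      ∀ y ∈ {y : MonoidAlgebra O G | ∃ ω ∈ Ω, y = ω * b * MonoidAlgebra.of O G x * j},
        MonoidAlgebra.of O G d₁ * y * MonoidAlgebra.of O G d₂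
          ∈ {y : MonoidAlgebra O G | ∃ ω ∈ Ω, y = ω * b * MonoidAlgebra.of O G x * j}) :=
  stmt_17_general N D x hx j hjidem hjD a b hbN hab haD hcomm Ω hΩj hΩstable hΩindep
end
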